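/- arXiv:2209.05211 — 3 statements merged into one kernel-verified Lean document; each statement's English description precedes it below -/
import Mathlib

section
/- For probability measures μ_1, μ_2 on ℝ (with finite p-th moments), the p-Wasserstein distance is given by the quantile representation W_p(μ_1, μ_2)^p = ∫_0^1 |g_1(s) - g_2(s)|^p ds, where g_i is the quantile function (generalized inverse of the CDF) of μ_i. -/
open MeasureTheory Set Filter Topology ProbabilityTheory

noncomputable section WQaux

namespace WQaux

variable {p : ℝ}

/-! ### The Stieltjes measure playing the role of `φ''` for `φ t = |t|^p` -/

def hfun (p : ℝ) : ℝ → ℝ := fun x => if x < 0 then 0 else p * x ^ (p - 1)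

lemma hfun_of_neg {x : ℝ} (hx : x < 0) : hfun p x = 0 := if_pos hx

lemma hfun_of_nonneg {x : ℝ} (hx : 0 ≤ x) : hfun p x = p * x ^ (p - 1) :=
  if_neg (not_lt.2 hx)

lemma hfun_nonneg (hp : 1 ≤ p) (x : ℝ) : 0 ≤ hfun p x := by
  rcases lt_or_ge x 0 with h | h
  · rw [hfun_of_neg h]
  · rw [hfun_of_nonneg h]
    exact mul_nonneg (by linarith) (Real.rpow_nonneg h _)

lemma hfun_mono (hp : 1 ≤ p) : Monotone (hfun p) := by
  intro x y hxy
  rcases lt_or_ge x 0 with hx | hx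
  · rw [hfun_of_neg hx]; exact hfun_nonneg hp y
  · rw [hfun_of_nonneg hx, hfun_of_nonneg (hx.trans hxy)]
    exact mul_le_mul_of_nonneg_left
      (Real.rpow_le_rpow hx hxy (by linarith)) (by linarith)

lemma hfun_rightCont (hp : 1 ≤ p) (x : ℝ) :
    ContinuousWithinAt (hfun p) (Ici x) x := by
  have hc : Continuous fun y : ℝ => p * y ^ (p - 1) :=
    continuous_const.mul (Real.continuous_rpow_const (by linarith))
  rcases lt_or_ge x 0 with hx | hx
  · have : ∀ᶠ y in 𝓝 x, hfun p y = (fun _ => (0:ℝ)) y := by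
      filter_upwards [eventually_lt_nhds hx] with y hy using hfun_of_neg hy
    exact (continuousWithinAt_const.congr_of_eventuallyEq
      (nhdsWithin_le_nhds this) (hfun_of_neg hx)).congr (fun _ _ => rfl) rfl
  · refine (hc.continuousWithinAt).congr (fun y hy => ?_) (hfun_of_nonneg hx)
    exact hfun_of_nonneg (p := p) (hx.trans hy)

/-- The Stieltjes function associated with `hfun`. -/
def Hst (p : ℝ) (hp : 1 ≤ p) : StieltjesFunction ℝ :=
  ⟨hfun p, hfun_mono hp, hfun_rightCont hp⟩

lemma hfun_tendsto_atBot (hp : 1 ≤ p) : Tendsto (hfun p) atBot (𝓝 0) := by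
  refine Tendsto.congr' ?_ tendsto_const_nhds
  filter_upwards [eventually_lt_atBot (0:ℝ)] with y hy using (hfun_of_neg hy).symm

lemma Hst_measure_Iic (hp : 1 ≤ p) (c : ℝ) :
    (Hst p hp).measure (Iic c) = ENNReal.ofReal (hfun p c) := by
  rw [StieltjesFunction.measure_Iic _ (hfun_tendsto_atBot hp), sub_zero]; rfl

lemma leftLim_hfun (hp : 1 ≤ p) {c : ℝ} (hc : c ≠ 0) :
    Function.leftLim (hfun p) c = hfun p c := by
  rcases lt_or_gt_of_ne hc with hc | hc
  · have : ∀ᶠ y in 𝓝[<] c, hfun p y = (0:ℝ) := by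
      filter_upwards [eventually_nhdsWithin_of_eventually_nhds (eventually_lt_nhds hc)] with
        y hy using hfun_of_neg hy
    rw [leftLim_eq_of_tendsto
      (Tendsto.congr' (this.mono fun _ h => h.symm) tendsto_const_nhds), hfun_of_neg hc]
  · have hcont : ContinuousAt (hfun p) c := by
      have hc' : Continuous fun y : ℝ => p * y ^ (p - 1) :=
        continuous_const.mul (Real.continuous_rpow_const (by linarith))
      refine hc'.continuousAt.congr ?_
      filter_upwards [eventually_gt_nhds hc] with y hy using
        (hfun_of_nonneg (p := p) hy.le).symm
    exact leftLim_eq_of_tendsto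
      (hcont.continuousWithinAt.tendsto)

lemma Hst_measure_Iio (hp : 1 ≤ p) (c : ℝ) :
    (Hst p hp).measure (Iio c) = ENNReal.ofReal (Function.leftLim (hfun p) c) := by
  have h1 : Iio c = Iic c \ {c} := by ext y; simp [lt_iff_le_and_ne]
  have hfin : (Hst p hp).measure {c} ≠ ⊤ := by
    rw [StieltjesFunction.measure_singleton]; exact ENNReal.ofReal_ne_top
  rw [h1, measure_diff (by simp) (measurableSet_singleton c).nullMeasurableSet hfin,
    Hst_measure_Iic hp, StieltjesFunction.measure_singleton]
  show _ - ENNReal.ofReal (hfun p c - Function.leftLim (hfun p) c) = _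
  have hle : Function.leftLim (hfun p) c ≤ hfun p c := (hfun_mono hp).leftLim_le le_rfl
  have h0 : 0 ≤ Function.leftLim (hfun p) c := by
    have := (hfun_mono hp).le_leftLim (show c - 1 < c by linarith)
    exact le_trans (hfun_nonneg hp _) this
  rw [← ENNReal.ofReal_sub _ (by linarith)]
  ring_nf

lemma Hst_measure_Iio_nonpos (hp : 1 ≤ p) {c : ℝ} (hc : c ≤ 0) :
    (Hst p hp).measure (Iio c) = 0 := by
  rw [Hst_measure_Iio hp]
  have : Function.leftLim (hfun p) c = 0 := by
    have : ∀ᶠ y in 𝓝[<] c, hfun p y = (0:ℝ) := by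
      filter_upwards [self_mem_nhdsWithin] with y hy
      exact hfun_of_neg (lt_of_lt_of_le hy hc)
    exact leftLim_eq_of_tendsto
      (Tendsto.congr' (this.mono fun _ h => h.symm) tendsto_const_nhds)
  simp [this]

/-! ### The key identity `(volume ⊗ μ_h) {(s,u) | a ≤ s, s + u < b} = (b-a)^p` -/

lemma intInt (hp : 1 ≤ p) (a b : ℝ) :
    IntervalIntegrable (fun s => p * (b - s) ^ (p - 1)) volume a b := by
  have h0 : IntervalIntegrable (fun x : ℝ => x ^ (p - 1)) volume (b - a) (b - b) :=
    intervalIntegral.intervalIntegrable_rpow (Or.inl (by linarith))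
  simpa using (h0.comp_sub_left b).const_mul p

lemma integral_aux (hp : 1 ≤ p) {a b : ℝ} (hab : a ≤ b) :
    ∫ s in Ioc a b, p * (b - s) ^ (p - 1) = (b - a) ^ p := by
  have hp0 : p ≠ 0 := by positivity
  rw [← intervalIntegral.integral_of_le hab, intervalIntegral.integral_const_mul,
    intervalIntegral.integral_comp_sub_left (fun x : ℝ => x ^ (p - 1)) b,
    integral_rpow (Or.inl (by linarith)), sub_self, sub_add_cancel, Real.zero_rpow hp0, sub_zero]
  field_simp

lemma slice_measurableSet (a b : ℝ) :
    MeasurableSet {w : ℝ × ℝ | a ≤ w.1 ∧ w.1 + w.2 < b} :=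
  (measurableSet_le measurable_const measurable_fst).inter
    (measurableSet_lt (measurable_fst.add measurable_snd) measurable_const)

lemma slice_measure (hp : 1 ≤ p) {a b : ℝ} (hab : a ≤ b) :
    (volume.prod (Hst p hp).measure) {w : ℝ × ℝ | a ≤ w.1 ∧ w.1 + w.2 < b}
      = ENNReal.ofReal ((b - a) ^ p) := by
  set H := (Hst p hp).measure with hH
  rw [Measure.prod_apply (slice_measurableSet a b)]
  have key : ∫⁻ s, H (Prod.mk s ⁻¹' {w : ℝ × ℝ | a ≤ w.1 ∧ w.1 + w.2 < b})
      = ∫⁻ s in Ici a, H (Iio (b - s)) := by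
    rw [← lintegral_indicator measurableSet_Ici]
    refine lintegral_congr fun s => ?_
    rw [Set.indicator_apply]
    by_cases hs : s ∈ Ici a
    · rw [if_pos hs]
      have hs' : a ≤ s := hs
      congr 1
      ext u
      simp only [mem_preimage, mem_setOf_eq, mem_Iio, hs', true_and]
      constructor
      · intro h; linarith
      · intro h; linarith
    · rw [if_neg hs]
      have hs' : ¬ a ≤ s := hs
      convert measure_empty (μ := H)
      ext u
      simp [hs']
  rw [key,
    ← Measure.restrict_congr_set Ioi_ae_eq_Ici,
    ← Ioc_union_Ioi_eq_Ioi hab,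
    lintegral_union measurableSet_Ioi (Ioc_disjoint_Ioi le_rfl)]
  have h2 : ∫⁻ s in Ioi b, H (Iio (b - s)) = 0 := by
    rw [setLIntegral_congr_fun_ae measurableSet_Ioi
      (ae_of_all _ (fun s hs => Hst_measure_Iio_nonpos hp (by simp at hs; linarith)))]
    simp
  have h1 : ∫⁻ s in Ioc a b, H (Iio (b - s))
      = ∫⁻ s in Ioc a b, ENNReal.ofReal (p * (b - s) ^ (p - 1)) := by
    refine setLIntegral_congr_fun_ae measurableSet_Ioc ?_
    have hb : ∀ᵐ s : ℝ, s ≠ b := by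
      refine ae_iff.2 ?_
      simp [Real.volume_singleton]
    filter_upwards [hb] with s hs hmem
    have hsb : s < b := lt_of_le_of_ne hmem.2 hs
    rw [hH, Hst_measure_Iio hp,
      leftLim_hfun hp (show b - s ≠ 0 by intro h; rw [sub_eq_zero] at h; exact hs h.symm)]
    · rw [hfun_of_nonneg (by linarith)]
  rw [h1, h2, add_zero,
    ← ofReal_integral_eq_lintegral_ofReal
      (((intervalIntegrable_iff_integrableOn_Ioc_of_le hab).1 (intInt hp a b)))
      ((ae_restrict_iff' measurableSet_Ioc).2 (ae_of_all _ (fun s hs =>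
        mul_nonneg (by linarith) (Real.rpow_nonneg (by linarith [hs.2]) _)))),
    integral_aux hp hab]

lemma slice_measure' (hp : 1 ≤ p) (x y : ℝ) :
    (volume.prod (Hst p hp).measure) {w : ℝ × ℝ | min x y ≤ w.1 ∧ w.1 + w.2 < max x y}
      = ENNReal.ofReal (|x - y| ^ p) := by
  rw [slice_measure hp min_le_max, max_sub_min_eq_abs, abs_sub_comm]

/-! ### Tonelli step -/

lemma lintegral_eq_double (hp : 1 ≤ p) (ν : Measure (ℝ × ℝ)) [SFinite ν] :
    ∫⁻ q, ENNReal.ofReal (|q.1 - q.2| ^ p) ∂ν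
      = ∫⁻ w, ν {q : ℝ × ℝ | min q.1 q.2 ≤ w.1 ∧ w.1 + w.2 < max q.1 q.2}
          ∂(volume.prod (Hst p hp).measure) := by
  set M := (volume : Measure ℝ).prod (Hst p hp).measure with hM
  set S : Set ((ℝ × ℝ) × (ℝ × ℝ)) :=
    {r | min r.1.1 r.1.2 ≤ r.2.1 ∧ r.2.1 + r.2.2 < max r.1.1 r.1.2} with hS
  have hSm : MeasurableSet S :=
    (measurableSet_le (measurable_fst.fst.min measurable_fst.snd) measurable_snd.fst).inter
      (measurableSet_lt (measurable_snd.fst.add measurable_snd.snd)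
        (measurable_fst.fst.max measurable_fst.snd))
  have step1 : ∫⁻ q, ENNReal.ofReal (|q.1 - q.2| ^ p) ∂ν
      = ∫⁻ q, ∫⁻ w, S.indicator 1 (q, w) ∂M ∂ν := by
    refine lintegral_congr fun q => ?_
    rw [← slice_measure' hp q.1 q.2, ← hM]
    have hsl : MeasurableSet {w : ℝ × ℝ | min q.1 q.2 ≤ w.1 ∧ w.1 + w.2 < max q.1 q.2} :=
      (measurableSet_le measurable_const measurable_fst).inter
        (measurableSet_lt (measurable_fst.add measurable_snd) measurable_const)
    rw [← lintegral_indicator_one hsl]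
    exact lintegral_congr fun w => rfl
  have step2 : ∫⁻ q, ∫⁻ w, S.indicator 1 (q, w) ∂M ∂ν
      = ∫⁻ w, ∫⁻ q, S.indicator 1 (q, w) ∂ν ∂M :=
    lintegral_lintegral_swap ((measurable_one.indicator hSm).aemeasurable)
  have step3 : ∫⁻ w, ∫⁻ q, S.indicator 1 (q, w) ∂ν ∂M
      = ∫⁻ w, ν {q : ℝ × ℝ | min q.1 q.2 ≤ w.1 ∧ w.1 + w.2 < max q.1 q.2} ∂M := by
    refine lintegral_congr fun w => ?_
    have hsl : MeasurableSet {q : ℝ × ℝ | min q.1 q.2 ≤ w.1 ∧ w.1 + w.2 < max q.1 q.2} :=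
      (measurableSet_le (measurable_fst.min measurable_snd) measurable_const).inter
        (measurableSet_lt measurable_const (measurable_fst.max measurable_snd))
    rw [← lintegral_indicator_one hsl]
    exact lintegral_congr fun q => rfl
  rw [step1, step2, step3]

/-! ### Quantile functions -/

lemma gal (μ : Measure ℝ) [IsProbabilityMeasure μ] {v : ℝ} (h0 : 0 < v) (h1 : v < 1) (x : ℝ) :
    sInf {y : ℝ | v ≤ (μ (Iic y)).toReal} ≤ x ↔ v ≤ (μ (Iic x)).toReal := by
  have hset : {y : ℝ | v ≤ (μ (Iic y)).toReal} = {y | v ≤ cdf μ y} := by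
    ext y; simp [cdf_eq_real, measureReal_def]
  rw [hset, ← measureReal_def, ← cdf_eq_real]
  set S := {y | v ≤ cdf μ y} with hSdef
  have hne : S.Nonempty := by
    obtain ⟨y, hy⟩ := ((tendsto_cdf_atTop μ).eventually (eventually_ge_nhds h1)).exists
    exact ⟨y, hy⟩
  have hbdd : BddBelow S := by
    obtain ⟨x₀, hx₀⟩ := ((tendsto_cdf_atBot μ).eventually (eventually_lt_nhds h0)).exists
    refine ⟨x₀, fun y hy => ?_⟩
    by_contra hlt
    exact absurd (le_trans hy (monotone_cdf μ (le_of_not_ge hlt))) (not_le.2 hx₀)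
  have hmem : v ≤ cdf μ (sInf S) := by
    have h2 : ∀ᶠ z in 𝓝[>] (sInf S), v ≤ cdf μ z := by
      filter_upwards [self_mem_nhdsWithin] with z hz
      obtain ⟨y, hyS, hyz⟩ := exists_lt_of_csInf_lt hne hz
      exact le_trans hyS (monotone_cdf μ hyz.le)
    exact ge_of_tendsto
      (((cdf μ).right_continuous _).mono Ioi_subset_Ici_self).tendsto h2
  constructor
  · intro h; exact le_trans hmem (monotone_cdf μ h)
  · intro h; exact csInf_le hbdd h

/-- Measurable version of the quantile function. -/
def quant (μ : Measure ℝ) : ℝ → ℝ := fun v =>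
  if 0 < v ∧ v < 1 then sInf {y : ℝ | v ≤ (μ (Iic y)).toReal} else 0

lemma quant_preIic (μ : Measure ℝ) [IsProbabilityMeasure μ] (x : ℝ) :
    quant μ ⁻¹' Iic x = (Ioo 0 1 ∩ Iic ((μ (Iic x)).toReal)) ∪
      ((Ioo (0:ℝ) 1)ᶜ ∩ {v : ℝ | (0:ℝ) ≤ x}) := by
  ext v
  by_cases hv : 0 < v ∧ v < 1
  · simp only [mem_preimage, mem_Iic, quant, if_pos hv, mem_union, mem_inter_iff, mem_Ioo,
      mem_compl_iff, mem_setOf_eq, gal μ hv.1 hv.2 x]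
    tauto
  · simp only [mem_preimage, mem_Iic, quant, if_neg hv, mem_union, mem_inter_iff, mem_Ioo,
      mem_compl_iff, mem_setOf_eq]
    tauto

lemma quant_measurable (μ : Measure ℝ) [IsProbabilityMeasure μ] :
    Measurable (quant μ) := by
  refine measurable_of_Iic fun x => ?_
  rw [quant_preIic]
  by_cases hx : (0:ℝ) ≤ x
  · have : {v : ℝ | (0:ℝ) ≤ x} = univ := by simp [hx]
    rw [this]
    exact (measurableSet_Ioo.inter measurableSet_Iic).union
      (measurableSet_Ioo.compl.inter MeasurableSet.univ)
  · have : {v : ℝ | (0:ℝ) ≤ x} = ∅ := by simp [hx]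
    rw [this]
    exact (measurableSet_Ioo.inter measurableSet_Iic).union
      (measurableSet_Ioo.compl.inter MeasurableSet.empty)

lemma vol_Ioo_inter_Iic {c : ℝ} (h1 : c ≤ 1) :
    volume (Ioo (0:ℝ) 1 ∩ Iic c) = ENNReal.ofReal c := by
  have hset : Ioo (0:ℝ) 1 ∩ Iic c = Ioc 0 c \ {1} := by
    ext v
    simp only [mem_inter_iff, mem_Ioo, mem_Iic, mem_diff, mem_Ioc, mem_singleton_iff]
    constructor
    · rintro ⟨⟨hv0, hv1⟩, hvc⟩; exact ⟨⟨hv0, hvc⟩, ne_of_lt hv1⟩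
    · rintro ⟨⟨hv0, hvc⟩, hv1⟩
      exact ⟨⟨hv0, lt_of_le_of_ne (le_trans hvc h1) hv1⟩, hvc⟩
  rw [hset, measure_diff_null (Real.volume_singleton), Real.volume_Ioc, sub_zero]

instance : IsProbabilityMeasure (volume.restrict (Ioo (0:ℝ) 1)) := by
  constructor
  rw [Measure.restrict_apply_univ, Real.volume_Ioo]
  norm_num

lemma prob_toReal_le_one (μ : Measure ℝ) [IsProbabilityMeasure μ] (s : Set ℝ) :
    (μ s).toReal ≤ 1 := by
  rw [← ENNReal.toReal_one]
  exact ENNReal.toReal_mono ENNReal.one_ne_top prob_le_one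

lemma quant_map (μ : Measure ℝ) [IsProbabilityMeasure μ] :
    Measure.map (quant μ) (volume.restrict (Ioo (0:ℝ) 1)) = μ := by
  haveI : IsProbabilityMeasure (Measure.map (quant μ) (volume.restrict (Ioo (0:ℝ) 1))) :=
    Measure.isProbabilityMeasure_map (quant_measurable μ).aemeasurable
  refine Measure.ext_of_Iic _ _ fun x => ?_
  rw [Measure.map_apply (quant_measurable μ) measurableSet_Iic,
    Measure.restrict_apply ((quant_measurable μ) measurableSet_Iic),
    quant_preIic, union_inter_distrib_right]
  have h2 : ((Ioo (0:ℝ) 1)ᶜ ∩ {v : ℝ | (0:ℝ) ≤ x}) ∩ Ioo 0 1 = ∅ := by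
    ext v
    simp only [mem_inter_iff, mem_compl_iff, mem_empty_iff_false, iff_false]
    tauto
  have h3 : (Ioo 0 1 ∩ Iic ((μ (Iic x)).toReal)) ∩ Ioo 0 1
      = Ioo 0 1 ∩ Iic ((μ (Iic x)).toReal) := by
    rw [inter_comm, ← inter_assoc, inter_self]
  rw [h2, h3, union_empty, vol_Ioo_inter_Iic (prob_toReal_le_one μ _),
    ENNReal.ofReal_toReal (measure_ne_top μ _)]

/-! ### The comparison of slice measures -/

section Compare

variable (μ₁ μ₂ : Measure ℝ) [IsProbabilityMeasure μ₁] [IsProbabilityMeasure μ₂]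

/-- The monotone (quantile) coupling. -/
def couplingStar (μ₁ μ₂ : Measure ℝ) : Measure (ℝ × ℝ) :=
  Measure.map (fun v => (quant μ₁ v, quant μ₂ v)) (volume.restrict (Ioo (0:ℝ) 1))

lemma pair_measurable : Measurable (fun v => (quant μ₁ v, quant μ₂ v)) :=
  (quant_measurable μ₁).prodMk (quant_measurable μ₂)

lemma measurable_B1 (s t : ℝ) : MeasurableSet {q : ℝ × ℝ | q.1 ≤ s ∧ t < q.2} :=
  (measurableSet_le measurable_fst measurable_const).inter
    (measurableSet_lt measurable_const measurable_snd)

lemma measurable_B2 (s t : ℝ) : MeasurableSet {q : ℝ × ℝ | q.2 ≤ s ∧ t < q.1} :=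
  (measurableSet_le measurable_snd measurable_const).inter
    (measurableSet_lt measurable_const measurable_fst)

lemma couplingStar_B1 (s t : ℝ) :
    couplingStar μ₁ μ₂ {q : ℝ × ℝ | q.1 ≤ s ∧ t < q.2}
      = μ₁ (Iic s) - μ₂ (Iic t) := by
  rw [couplingStar, Measure.map_apply (pair_measurable μ₁ μ₂) (measurable_B1 s t),
    Measure.restrict_apply ((pair_measurable μ₁ μ₂) (measurable_B1 s t))]
  set c₁ := (μ₁ (Iic s)).toReal with hc₁
  set c₂ := (μ₂ (Iic t)).toReal with hc₂
  have hset : (fun v => (quant μ₁ v, quant μ₂ v)) ⁻¹' {q : ℝ × ℝ | q.1 ≤ s ∧ t < q.2}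
      ∩ Ioo 0 1 = Ioc c₂ c₁ \ {1} := by
    ext v
    simp only [mem_inter_iff, mem_preimage, mem_setOf_eq, mem_Ioo, mem_diff, mem_Ioc,
      mem_singleton_iff]
    constructor
    · rintro ⟨⟨hle, hlt⟩, hv0, hv1⟩
      rw [quant, if_pos ⟨hv0, hv1⟩] at hle hlt
      refine ⟨⟨?_, (gal μ₁ hv0 hv1 s).1 hle⟩, ne_of_lt hv1⟩
      by_contra hcon
      exact absurd ((gal μ₂ hv0 hv1 t).2 (le_of_not_gt hcon)) (not_le.2 hlt)
    · rintro ⟨⟨hgt, hle⟩, hne⟩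
      have hv0 : 0 < v := lt_of_le_of_lt ENNReal.toReal_nonneg hgt
      have hv1 : v < 1 := lt_of_le_of_ne (le_trans hle (prob_toReal_le_one μ₁ _)) hne
      refine ⟨⟨?_, ?_⟩, hv0, hv1⟩
      · rw [quant, if_pos ⟨hv0, hv1⟩]
        exact (gal μ₁ hv0 hv1 s).2 hle
      · rw [quant, if_pos ⟨hv0, hv1⟩]
        by_contra hcon
        exact absurd ((gal μ₂ hv0 hv1 t).1 (le_of_not_gt hcon)) (not_le.2 hgt)
  rw [hset, measure_diff_null (Real.volume_singleton), Real.volume_Ioc,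
    hc₁, hc₂, ENNReal.ofReal_sub _ ENNReal.toReal_nonneg,
    ENNReal.ofReal_toReal (measure_ne_top μ₁ _), ENNReal.ofReal_toReal (measure_ne_top μ₂ _)]

lemma couplingStar_B2 (s t : ℝ) :
    couplingStar μ₁ μ₂ {q : ℝ × ℝ | q.2 ≤ s ∧ t < q.1}
      = μ₂ (Iic s) - μ₁ (Iic t) := by
  rw [couplingStar, Measure.map_apply (pair_measurable μ₁ μ₂) (measurable_B2 s t),
    Measure.restrict_apply ((pair_measurable μ₁ μ₂) (measurable_B2 s t))]
  set c₁ := (μ₂ (Iic s)).toReal with hc₁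
  set c₂ := (μ₁ (Iic t)).toReal with hc₂
  have hset : (fun v => (quant μ₁ v, quant μ₂ v)) ⁻¹' {q : ℝ × ℝ | q.2 ≤ s ∧ t < q.1}
      ∩ Ioo 0 1 = Ioc c₂ c₁ \ {1} := by
    ext v
    simp only [mem_inter_iff, mem_preimage, mem_setOf_eq, mem_Ioo, mem_diff, mem_Ioc,
      mem_singleton_iff]
    constructor
    · rintro ⟨⟨hle, hlt⟩, hv0, hv1⟩
      rw [quant, if_pos ⟨hv0, hv1⟩] at hle hlt
      refine ⟨⟨?_, (gal μ₂ hv0 hv1 s).1 hle⟩, ne_of_lt hv1⟩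
      by_contra hcon
      exact absurd ((gal μ₁ hv0 hv1 t).2 (le_of_not_gt hcon)) (not_le.2 hlt)
    · rintro ⟨⟨hgt, hle⟩, hne⟩
      have hv0 : 0 < v := lt_of_le_of_lt ENNReal.toReal_nonneg hgt
      have hv1 : v < 1 := lt_of_le_of_ne (le_trans hle (prob_toReal_le_one μ₂ _)) hne
      refine ⟨⟨?_, ?_⟩, hv0, hv1⟩
      · rw [quant, if_pos ⟨hv0, hv1⟩]
        exact (gal μ₂ hv0 hv1 s).2 hle
      · rw [quant, if_pos ⟨hv0, hv1⟩]
        by_contra hcon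
        exact absurd ((gal μ₁ hv0 hv1 t).1 (le_of_not_gt hcon)) (not_le.2 hgt)
  rw [hset, measure_diff_null (Real.volume_singleton), Real.volume_Ioc,
    hc₁, hc₂, ENNReal.ofReal_sub _ ENNReal.toReal_nonneg,
    ENNReal.ofReal_toReal (measure_ne_top μ₂ _), ENNReal.ofReal_toReal (measure_ne_top μ₁ _)]

lemma coupling_B2_ge (ν : Measure (ℝ × ℝ)) (hm1 : ν.map Prod.fst = μ₁)
    (hm2 : ν.map Prod.snd = μ₂) (s t : ℝ) :
    μ₂ (Iic s) - μ₁ (Iic t) ≤ ν {q : ℝ × ℝ | q.2 ≤ s ∧ t < q.1} := by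
  rw [tsub_le_iff_right]
  have hsub : (Prod.snd ⁻¹' Iic s : Set (ℝ × ℝ))
      ⊆ {q : ℝ × ℝ | q.2 ≤ s ∧ t < q.1} ∪ (Prod.fst ⁻¹' Iic t) := by
    rintro q hq
    by_cases h : q.1 ≤ t
    · exact Or.inr h
    · exact Or.inl ⟨hq, not_le.1 h⟩
  calc μ₂ (Iic s) = ν (Prod.snd ⁻¹' Iic s) := by
        rw [← hm2, Measure.map_apply measurable_snd measurableSet_Iic]
    _ ≤ ν ({q : ℝ × ℝ | q.2 ≤ s ∧ t < q.1} ∪ (Prod.fst ⁻¹' Iic t)) := measure_mono hsub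
    _ ≤ ν {q : ℝ × ℝ | q.2 ≤ s ∧ t < q.1} + ν (Prod.fst ⁻¹' Iic t) := measure_union_le _ _
    _ = ν {q : ℝ × ℝ | q.2 ≤ s ∧ t < q.1} + μ₁ (Iic t) := by
        rw [← hm1, Measure.map_apply measurable_fst measurableSet_Iic]

lemma coupling_B1_ge (ν : Measure (ℝ × ℝ)) (hm1 : ν.map Prod.fst = μ₁)
    (hm2 : ν.map Prod.snd = μ₂) (s t : ℝ) :
    μ₁ (Iic s) - μ₂ (Iic t) ≤ ν {q : ℝ × ℝ | q.1 ≤ s ∧ t < q.2} := by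
  rw [tsub_le_iff_right]
  have hsub : (Prod.fst ⁻¹' Iic s : Set (ℝ × ℝ))
      ⊆ {q : ℝ × ℝ | q.1 ≤ s ∧ t < q.2} ∪ (Prod.snd ⁻¹' Iic t) := by
    rintro q hq
    by_cases h : q.2 ≤ t
    · exact Or.inr h
    · exact Or.inl ⟨hq, not_le.1 h⟩
  calc μ₁ (Iic s) = ν (Prod.fst ⁻¹' Iic s) := by
        rw [← hm1, Measure.map_apply measurable_fst measurableSet_Iic]
    _ ≤ ν ({q : ℝ × ℝ | q.1 ≤ s ∧ t < q.2} ∪ (Prod.snd ⁻¹' Iic t)) := measure_mono hsub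
    _ ≤ ν {q : ℝ × ℝ | q.1 ≤ s ∧ t < q.2} + ν (Prod.snd ⁻¹' Iic t) := measure_union_le _ _
    _ = ν {q : ℝ × ℝ | q.1 ≤ s ∧ t < q.2} + μ₂ (Iic t) := by
        rw [← hm2, Measure.map_apply measurable_snd measurableSet_Iic]

lemma slice_eq_union (s t : ℝ) (hst : s ≤ t) :
    {q : ℝ × ℝ | min q.1 q.2 ≤ s ∧ t < max q.1 q.2}
      = {q : ℝ × ℝ | q.1 ≤ s ∧ t < q.2} ∪ {q : ℝ × ℝ | q.2 ≤ s ∧ t < q.1} := by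
  ext q
  simp only [mem_setOf_eq, mem_union, min_le_iff, lt_max_iff]
  constructor
  · rintro ⟨h1 | h1, h2 | h2⟩
    · exact absurd h2 (by linarith)
    · exact Or.inl ⟨h1, h2⟩
    · exact Or.inr ⟨h1, h2⟩
    · exact absurd h2 (by linarith)
  · rintro (⟨h1, h2⟩ | ⟨h1, h2⟩)
    · exact ⟨Or.inl h1, Or.inr h2⟩
    · exact ⟨Or.inr h1, Or.inl h2⟩

lemma slice_disjoint (s t : ℝ) (hst : s ≤ t) :
    Disjoint {q : ℝ × ℝ | q.1 ≤ s ∧ t < q.2} {q : ℝ × ℝ | q.2 ≤ s ∧ t < q.1} := by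
  rw [Set.disjoint_left]
  rintro q ⟨h1, h2⟩ ⟨h3, h4⟩
  linarith

lemma slice_compare (ν : Measure (ℝ × ℝ)) [IsProbabilityMeasure ν]
    (hm1 : ν.map Prod.fst = μ₁) (hm2 : ν.map Prod.snd = μ₂) {s t : ℝ} (hst : s ≤ t) :
    couplingStar μ₁ μ₂ {q : ℝ × ℝ | min q.1 q.2 ≤ s ∧ t < max q.1 q.2}
      ≤ ν {q : ℝ × ℝ | min q.1 q.2 ≤ s ∧ t < max q.1 q.2} := by
  rw [slice_eq_union s t hst,
    measure_union (slice_disjoint s t hst) (measurable_B2 s t),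
    measure_union (slice_disjoint s t hst) (measurable_B2 s t)]
  have hstar1 := couplingStar_B1 μ₁ μ₂ s t
  have hstar2 := couplingStar_B2 μ₁ μ₂ s t
  have hν2 := coupling_B2_ge μ₁ μ₂ ν hm1 hm2 s t
  exact add_le_add (hstar1 ▸ coupling_B1_ge μ₁ μ₂ ν hm1 hm2 s t) (hstar2 ▸ hν2)

lemma lintegral_compare (hp : 1 ≤ p) (ν : Measure (ℝ × ℝ)) [IsProbabilityMeasure ν]
    (hm1 : ν.map Prod.fst = μ₁) (hm2 : ν.map Prod.snd = μ₂) :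
    ∫⁻ q, ENNReal.ofReal (|q.1 - q.2| ^ p) ∂(couplingStar μ₁ μ₂)
      ≤ ∫⁻ q, ENNReal.ofReal (|q.1 - q.2| ^ p) ∂ν := by
  haveI : IsProbabilityMeasure (couplingStar μ₁ μ₂) :=
    Measure.isProbabilityMeasure_map (pair_measurable μ₁ μ₂).aemeasurable
  rw [lintegral_eq_double hp, lintegral_eq_double hp]
  refine lintegral_mono_ae ?_
  have hae : ∀ᵐ w ∂((volume : Measure ℝ).prod (Hst p hp).measure), (0:ℝ) ≤ w.2 := by
    rw [ae_iff]
    have hset : {w : ℝ × ℝ | ¬ (0:ℝ) ≤ w.2} = (univ : Set ℝ) ×ˢ (Iio (0:ℝ)) := by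
      ext w; simp [not_le]
    rw [hset, Measure.prod_prod, Hst_measure_Iio_nonpos hp le_rfl, mul_zero]
  filter_upwards [hae] with w hw
  exact slice_compare μ₁ μ₂ ν hm1 hm2 (show w.1 ≤ w.1 + w.2 by linarith)

lemma rpow_abs_sub_le (hp : 1 ≤ p) (x y : ℝ) :
    |x - y| ^ p ≤ 2 ^ p * (|x| ^ p + |y| ^ p) := by
  have hp0 : 0 ≤ p := by linarith
  have h1 : |x - y| ≤ |x| + |y| := by
    rw [sub_eq_add_neg]
    exact (abs_add_le _ _).trans_eq (by rw [abs_neg])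
  have h2 : |x| + |y| ≤ 2 * max |x| |y| := by
    rcases le_total |x| |y| with h | h
    · rw [max_eq_right h]; linarith
    · rw [max_eq_left h]; linarith
  have h3 : (max |x| |y|) ^ p ≤ |x| ^ p + |y| ^ p := by
    rcases le_total |x| |y| with h | h
    · rw [max_eq_right h]
      exact le_add_of_nonneg_left (Real.rpow_nonneg (abs_nonneg _) _)
    · rw [max_eq_left h]
      exact le_add_of_nonneg_right (Real.rpow_nonneg (abs_nonneg _) _)
  calc |x - y| ^ p ≤ (|x| + |y|) ^ p := Real.rpow_le_rpow (abs_nonneg _) h1 hp0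
    _ ≤ (2 * max |x| |y|) ^ p := Real.rpow_le_rpow (by positivity) h2 hp0
    _ = 2 ^ p * (max |x| |y|) ^ p :=
        Real.mul_rpow (by norm_num) (le_max_iff.2 (Or.inl (abs_nonneg x)))
    _ ≤ 2 ^ p * (|x| ^ p + |y| ^ p) :=
        mul_le_mul_of_nonneg_left h3 (Real.rpow_nonneg (by norm_num) _)

lemma measurable_rpow_abs (hp : 1 ≤ p) :
    Measurable (fun q : ℝ × ℝ => |q.1 - q.2| ^ p) :=
  (Real.continuous_rpow_const (by linarith : (0:ℝ) ≤ p)).measurable.comp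
    ((measurable_fst.sub measurable_snd).abs)

lemma measurable_rpow_abs1 (hp : 1 ≤ p) :
    Measurable (fun x : ℝ => ENNReal.ofReal (|x| ^ p)) :=
  ENNReal.measurable_ofReal.comp
    ((Real.continuous_rpow_const (by linarith : (0:ℝ) ≤ p)).measurable.comp measurable_abs)

lemma lintegral_rpow_ne_top (hp : 1 ≤ p) (ν : Measure (ℝ × ℝ))
    (hm1 : ν.map Prod.fst = μ₁) (hm2 : ν.map Prod.snd = μ₂)
    (hmom₁ : Integrable (fun x : ℝ => |x| ^ p) μ₁)
    (hmom₂ : Integrable (fun x : ℝ => |x| ^ p) μ₂) :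
    ∫⁻ q, ENNReal.ofReal (|q.1 - q.2| ^ p) ∂ν ≠ ⊤ := by
  have hb : ∀ q : ℝ × ℝ, ENNReal.ofReal (|q.1 - q.2| ^ p)
      ≤ ENNReal.ofReal ((2:ℝ) ^ p) *
        (ENNReal.ofReal (|q.1| ^ p) + ENNReal.ofReal (|q.2| ^ p)) := by
    intro q
    rw [← ENNReal.ofReal_add (Real.rpow_nonneg (abs_nonneg _) _)
        (Real.rpow_nonneg (abs_nonneg _) _),
      ← ENNReal.ofReal_mul (Real.rpow_nonneg (by norm_num) _)]
    exact ENNReal.ofReal_le_ofReal (rpow_abs_sub_le hp q.1 q.2)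
  have hmono := lintegral_mono (μ := ν) hb
  have h1 : ∫⁻ q : ℝ × ℝ, ENNReal.ofReal (|q.1| ^ p) ∂ν
      = ∫⁻ x, ENNReal.ofReal (|x| ^ p) ∂μ₁ := by
    rw [← hm1, lintegral_map (measurable_rpow_abs1 hp) measurable_fst]
  have h2 : ∫⁻ q : ℝ × ℝ, ENNReal.ofReal (|q.2| ^ p) ∂ν
      = ∫⁻ x, ENNReal.ofReal (|x| ^ p) ∂μ₂ := by
    rw [← hm2, lintegral_map (measurable_rpow_abs1 hp) measurable_snd]
  have hfin1 : ∫⁻ x, ENNReal.ofReal (|x| ^ p) ∂μ₁ < ⊤ := by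
    have := hmom₁.hasFiniteIntegral
    rw [HasFiniteIntegral] at this
    refine lt_of_eq_of_lt ?_ this
    refine lintegral_congr fun x => ?_
    rw [← Real.enorm_eq_ofReal (Real.rpow_nonneg (abs_nonneg _) _)]
  have hfin2 : ∫⁻ x, ENNReal.ofReal (|x| ^ p) ∂μ₂ < ⊤ := by
    have := hmom₂.hasFiniteIntegral
    rw [HasFiniteIntegral] at this
    refine lt_of_eq_of_lt ?_ this
    refine lintegral_congr fun x => ?_
    rw [← Real.enorm_eq_ofReal (Real.rpow_nonneg (abs_nonneg _) _)]
  refine ne_of_lt (lt_of_le_of_lt hmono ?_)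
  have hmf : Measurable fun q : ℝ × ℝ => ENNReal.ofReal (|q.1| ^ p) :=
    (measurable_rpow_abs1 hp).comp measurable_fst
  have hms : Measurable fun q : ℝ × ℝ => ENNReal.ofReal (|q.2| ^ p) :=
    (measurable_rpow_abs1 hp).comp measurable_snd
  rw [lintegral_const_mul (f := fun q : ℝ × ℝ =>
    ENNReal.ofReal (|q.1| ^ p) + ENNReal.ofReal (|q.2| ^ p)) _ (hmf.add hms), lintegral_add_left hmf]
  have : ∫⁻ q : ℝ × ℝ, ENNReal.ofReal (|q.1| ^ p) ∂ν
      + ∫⁻ q : ℝ × ℝ, ENNReal.ofReal (|q.2| ^ p) ∂ν < ⊤ := by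
    rw [h1, h2]
    exact ENNReal.add_lt_top.2 ⟨hfin1, hfin2⟩
  exact ENNReal.mul_lt_top ENNReal.ofReal_lt_top this

end Compare

end WQaux

end WQaux

open WQaux in
/-- Quantile representation of the p-Wasserstein distance on ℝ:
W_p(μ₁,μ₂)^p = ∫_0^1 |g₁(s) - g₂(s)|^p ds. -/
theorem wasserstein_quantile_representation
    (p : ℝ) (hp : 1 ≤ p)
    (μ₁ μ₂ : Measure ℝ) (hμ₁ : IsProbabilityMeasure μ₁) (hμ₂ : IsProbabilityMeasure μ₂)
    (hmom₁ : Integrable (fun x : ℝ => |x| ^ p) μ₁)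
    (hmom₂ : Integrable (fun x : ℝ => |x| ^ p) μ₂)
    (g₁ g₂ : ℝ → ℝ)
    (hg₁ : ∀ s : ℝ, g₁ s = sInf {x : ℝ | s ≤ (μ₁ (Set.Iic x)).toReal})
    (hg₂ : ∀ s : ℝ, g₂ s = sInf {x : ℝ | s ≤ (μ₂ (Set.Iic x)).toReal}) :
    sInf {r : ℝ | ∃ ν : Measure (ℝ × ℝ), IsProbabilityMeasure ν ∧
        ν.map Prod.fst = μ₁ ∧ ν.map Prod.snd = μ₂ ∧
        r = ∫ q : ℝ × ℝ, |q.1 - q.2| ^ p ∂ν} =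
      ∫ s in Set.Ioo (0 : ℝ) 1, |g₁ s - g₂ s| ^ p := by
  haveI := hμ₁; haveI := hμ₂
  have hq1 : ∀ v ∈ Set.Ioo (0:ℝ) 1, quant μ₁ v = g₁ v := fun v hv => by
    rw [hg₁ v, quant, if_pos ⟨hv.1, hv.2⟩]
  have hq2 : ∀ v ∈ Set.Ioo (0:ℝ) 1, quant μ₂ v = g₂ v := fun v hv => by
    rw [hg₂ v, quant, if_pos ⟨hv.1, hv.2⟩]
  set νs := couplingStar μ₁ μ₂ with hνs
  haveI : IsProbabilityMeasure νs :=
    Measure.isProbabilityMeasure_map (pair_measurable μ₁ μ₂).aemeasurable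
  have hm1s : νs.map Prod.fst = μ₁ := by
    rw [hνs, couplingStar, Measure.map_map measurable_fst (pair_measurable μ₁ μ₂)]
    exact quant_map μ₁
  have hm2s : νs.map Prod.snd = μ₂ := by
    rw [hνs, couplingStar, Measure.map_map measurable_snd (pair_measurable μ₁ μ₂)]
    exact quant_map μ₂
  have hIs : ∫⁻ q : ℝ × ℝ, ENNReal.ofReal (|q.1 - q.2| ^ p) ∂νs
      = ∫⁻ v in Set.Ioo (0:ℝ) 1, ENNReal.ofReal (|g₁ v - g₂ v| ^ p) := by
    have hME : Measurable fun q : ℝ × ℝ => ENNReal.ofReal (|q.1 - q.2| ^ p) :=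
      ENNReal.measurable_ofReal.comp (measurable_rpow_abs hp)
    rw [hνs, couplingStar, lintegral_map hME (pair_measurable μ₁ μ₂)]
    refine setLIntegral_congr_fun_ae measurableSet_Ioo (ae_of_all _ fun v hv => ?_)
    show ENNReal.ofReal (|quant μ₁ v - quant μ₂ v| ^ p) = _
    rw [hq1 v hv, hq2 v hv]
  have hRHSeq : ∫ s in Set.Ioo (0:ℝ) 1, |g₁ s - g₂ s| ^ p
      = (∫⁻ v in Set.Ioo (0:ℝ) 1, ENNReal.ofReal (|g₁ v - g₂ v| ^ p)).toReal := by
    have hmeas : AEStronglyMeasurable (fun v => |g₁ v - g₂ v| ^ p)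
        (volume.restrict (Set.Ioo (0:ℝ) 1)) := by
      have hbase : AEStronglyMeasurable (fun v => |quant μ₁ v - quant μ₂ v| ^ p)
          (volume.restrict (Set.Ioo (0:ℝ) 1)) :=
        ((measurable_rpow_abs hp).comp (pair_measurable μ₁ μ₂)).aestronglyMeasurable
      refine hbase.congr ?_
      filter_upwards [ae_restrict_mem measurableSet_Ioo] with v hv
      show |quant μ₁ v - quant μ₂ v| ^ p = _
      rw [hq1 v hv, hq2 v hv]
    rw [integral_eq_lintegral_of_nonneg_ae
      (ae_of_all _ fun v => Real.rpow_nonneg (abs_nonneg _) _) hmeas]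
  have hIconv : ∀ ν : Measure (ℝ × ℝ),
      ∫ q : ℝ × ℝ, |q.1 - q.2| ^ p ∂ν
        = (∫⁻ q : ℝ × ℝ, ENNReal.ofReal (|q.1 - q.2| ^ p) ∂ν).toReal := fun ν => by
    rw [integral_eq_lintegral_of_nonneg_ae
      (ae_of_all _ fun q => Real.rpow_nonneg (abs_nonneg _) _)
      (measurable_rpow_abs hp).aestronglyMeasurable]
  have hmem : (∫ s in Set.Ioo (0:ℝ) 1, |g₁ s - g₂ s| ^ p) ∈
      {r : ℝ | ∃ ν : Measure (ℝ × ℝ), IsProbabilityMeasure ν ∧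
        ν.map Prod.fst = μ₁ ∧ ν.map Prod.snd = μ₂ ∧
        r = ∫ q : ℝ × ℝ, |q.1 - q.2| ^ p ∂ν} :=
    ⟨νs, inferInstance, hm1s, hm2s, by rw [hIconv νs, hIs, hRHSeq]⟩
  refine le_antisymm (csInf_le ⟨0, ?_⟩ hmem) (le_csInf ⟨_, hmem⟩ ?_)
  · rintro r ⟨ν, hν, h1, h2, rfl⟩
    exact integral_nonneg fun q => Real.rpow_nonneg (abs_nonneg _) _
  · rintro r ⟨ν, hν, h1, h2, rfl⟩
    haveI := hν
    rw [hIconv ν, hRHSeq, ← hIs]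
    exact ENNReal.toReal_mono
      (lintegral_rpow_ne_top (μ₁ := μ₁) (μ₂ := μ₂) hp ν h1 h2 hmom₁ hmom₂)
      (lintegral_compare μ₁ μ₂ hp ν h1 h2)
end

section
/- For weights w ∈ Δ^{n-1} and quantile functions g_1,...,g_n of measures μ_1,...,μ_n on ℝ, the quantile function g_B = Σ_{i=1}^n w_i g_i minimizes g ↦ Σ_i w_i ∫_0^1 (g(s) - g_i(s))² ds over all quantile functions g, and the minimum value equals Σ_i w_i ∫_0^1 (g_B(s) - g_i(s))² ds. -/
/-!
Since `∑ wᵢ = 1` and `g_B = ∑ wᵢ gᵢ`, the weighted spread around any `h` splits pointwise as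
`∑ wᵢ (h - gᵢ)² = ∑ wᵢ (g_B - gᵢ)² + (h - g_B)²` (the cross term is `2 (h - g_B) (g_B - ∑ wᵢ gᵢ) = 0`).
Integrating, the Fréchet function at `h` exceeds its value at `g_B` by `‖h - g_B‖₂² ≥ 0`;
monotonicity of `g_B` is that of a nonnegative combination of monotone functions.
-/

open MeasureTheory

theorem MonotoneOn.finset_sum_const_mul {ι α R : Type*} [Preorder α] [Semiring R] [PartialOrder R]
    [IsOrderedRing R] {s : Set α} (t : Finset ι) {w : ι → R} (hw : ∀ i ∈ t, 0 ≤ w i)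
    {f : ι → α → R} (hf : ∀ i ∈ t, MonotoneOn (f i) s) :
    MonotoneOn (fun x => ∑ i ∈ t, w i * f i x) s :=
  fun _ hx _ hy hxy =>
    Finset.sum_le_sum fun i hi => mul_le_mul_of_nonneg_left (hf i hi hx hy hxy) (hw i hi)

theorem Finset.sum_mul_sq_sub_eq_of_sum_eq_one {ι : Type*} (t : Finset ι) {w x : ι → ℝ}
    (hw : ∑ i ∈ t, w i = 1) (y : ℝ) :
    ∑ i ∈ t, w i * (y - x i) ^ 2 =
      ∑ i ∈ t, w i * ((∑ j ∈ t, w j * x j) - x i) ^ 2 + (y - ∑ j ∈ t, w j * x j) ^ 2 := by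
  set b := ∑ j ∈ t, w j * x j
  have hcross : ∑ i ∈ t, w i * (2 * (y - b) * (b - x i)) = 0 := by
    simp only [mul_sub, Finset.sum_sub_distrib, ← Finset.sum_mul, hw]
    simp only [mul_left_comm (w _), ← Finset.mul_sum]
    ring
  calc ∑ i ∈ t, w i * (y - x i) ^ 2
      = ∑ i ∈ t, (w i * (b - x i) ^ 2 + w i * (2 * (y - b) * (b - x i)) + w i * (y - b) ^ 2) :=
        Finset.sum_congr rfl fun i _ => by ring
    _ = ∑ i ∈ t, w i * (b - x i) ^ 2 + (y - b) ^ 2 := by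
        rw [Finset.sum_add_distrib, Finset.sum_add_distrib, hcross, ← Finset.sum_mul, hw]
        ring

theorem MeasureTheory.sum_mul_integral_sq_sub_eq_of_sum_eq_one {ι α : Type*} [MeasurableSpace α]
    {μ : Measure α} (t : Finset ι) {w : ι → ℝ} (hw : ∑ i ∈ t, w i = 1) {f : ι → α → ℝ}
    (hf : ∀ i ∈ t, MemLp (f i) 2 μ) {h : α → ℝ} (hh : MemLp h 2 μ) :
    ∑ i ∈ t, w i * ∫ x, (h x - f i x) ^ 2 ∂μ =
      ∑ i ∈ t, w i * ∫ x, ((∑ j ∈ t, w j * f j x) - f i x) ^ 2 ∂μ +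
        ∫ x, (h x - ∑ j ∈ t, w j * f j x) ^ 2 ∂μ := by
  have hmean : MemLp (fun x => ∑ j ∈ t, w j * f j x) 2 μ :=
    memLp_finsetSum t fun j hj => (hf j hj).const_mul (w j)
  have hspread : ∀ {u : α → ℝ}, MemLp u 2 μ →
      ∀ i ∈ t, Integrable (fun x => w i * (u x - f i x) ^ 2) μ :=
    fun hu i hi => ((hu.sub (hf i hi)).integrable_sq).const_mul (w i)
  have hgap : Integrable (fun x => (h x - ∑ j ∈ t, w j * f j x) ^ 2) μ :=
    (hh.sub hmean).integrable_sq
  simp only [← integral_const_mul]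
  rw [← integral_finsetSum t (hspread hh), ← integral_finsetSum t (hspread hmean),
    ← integral_add (integrable_finsetSum t (hspread hmean)) hgap]
  exact integral_congr_ae (Filter.Eventually.of_forall fun x =>
    Finset.sum_mul_sq_sub_eq_of_sum_eq_one t hw (h x))

/-- The weighted average of quantile functions g_B = Σ wᵢ gᵢ is itself a quantile function
and minimizes the Fréchet function in quantile coordinates over all quantile functions. -/
theorem barycenter_quantile_minimizes_frechet_function
    {n : ℕ}
    (w : Fin n → ℝ) (hw : ∀ i, 0 ≤ w i) (hw1 : ∑ i, w i = 1)
    (g : Fin n → ℝ → ℝ)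
    (hmono : ∀ i, MonotoneOn (g i) (Set.Ioo 0 1))
    (hL2 : ∀ i, MemLp (g i) 2 (volume.restrict (Set.Ioo (0:ℝ) 1)))
    (gB : ℝ → ℝ) (hgB : ∀ s, gB s = ∑ i, w i * g i s) :
    MonotoneOn gB (Set.Ioo 0 1) ∧
    (∀ h : ℝ → ℝ, MonotoneOn h (Set.Ioo 0 1) →
        MemLp h 2 (volume.restrict (Set.Ioo (0:ℝ) 1)) →
        ∑ i, w i * ∫ s in Set.Ioo (0:ℝ) 1, (gB s - g i s) ^ 2 ≤
          ∑ i, w i * ∫ s in Set.Ioo (0:ℝ) 1, (h s - g i s) ^ 2) := by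
  obtain rfl : gB = fun s => ∑ i, w i * g i s := funext hgB
  refine ⟨MonotoneOn.finset_sum_const_mul _ (fun i _ => hw i) (fun i _ => hmono i), ?_⟩
  intro h _ hh
  rw [sum_mul_integral_sq_sub_eq_of_sum_eq_one Finset.univ hw1 (fun i _ => hL2 i) hh]
  exact le_add_of_nonneg_right (integral_nonneg fun s => sq_nonneg _)
end

section
/- Let S, S_1,...,S_n be symmetric positive definite d×d matrices and w ∈ Δ^{n-1}. For each i, let Y_i = Y_i(S̃) be the unique solution of the Sylvester equation Y_i (S_i^{1/2} S S_i^{1/2})^{1/2} + (S_i^{1/2} S S_i^{1/2})^{1/2} Y_i = S_i^{1/2} S̃ S_i^{1/2}. Then Tr(S̃ - 2 Σ_i w_i Y_i(S̃)) = Tr([I - Σ_i w_i S^{-1/2}(S^{1/2} S_i S^{1/2})^{1/2} S^{-1/2}] S̃) for all symmetric S̃. -/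
open Matrix

/-- The square root of a positive semidefinite matrix, as defined in Mathlib (Dec 2024),
where it has since been removed. -/
noncomputable def Matrix.PosSemidef.sqrt {n 𝕜 : Type*} [Fintype n] [DecidableEq n] [RCLike 𝕜]
    [PartialOrder 𝕜] {A : Matrix n n 𝕜} (hA : A.PosSemidef) : Matrix n n 𝕜 :=
  hA.1.eigenvectorUnitary.1 * diagonal ((↑) ∘ (√·) ∘ hA.1.eigenvalues) *
    (star hA.1.eigenvectorUnitary : Matrix n n 𝕜)

section PortSqrt

open scoped MatrixOrder

lemma Matrix.PosSemidef.sqrt_eq_cfc {d : ℕ} {A : Matrix (Fin d) (Fin d) ℝ} (hA : A.PosSemidef) :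
    hA.sqrt = CFC.sqrt A := by
  rw [CFC.sqrt_eq_cfc, cfc_nnreal_eq_real _ A hA.nonneg, hA.1.cfc_eq]
  simp only [IsHermitian.cfc, Unitary.conjStarAlgAut_apply, Matrix.PosSemidef.sqrt]
  congr 2
  ext i j
  simp [diagonal_apply, max_eq_left, hA.eigenvalues_nonneg]

lemma Matrix.PosSemidef.sqrt_mul_self {d : ℕ} {A : Matrix (Fin d) (Fin d) ℝ}
    (hA : A.PosSemidef) : hA.sqrt * hA.sqrt = A := by
  rw [hA.sqrt_eq_cfc]
  exact CFC.sqrt_mul_sqrt_self A hA.nonneg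

lemma Matrix.PosSemidef.posSemidef_sqrt {d : ℕ} {A : Matrix (Fin d) (Fin d) ℝ}
    (hA : A.PosSemidef) : hA.sqrt.PosSemidef := by
  rw [hA.sqrt_eq_cfc]
  exact (CFC.sqrt_nonneg A).posSemidef

lemma Matrix.PosSemidef.eq_sqrt_of_sq_eq {d : ℕ} {A : Matrix (Fin d) (Fin d) ℝ}
    (hA : A.PosSemidef) {B : Matrix (Fin d) (Fin d) ℝ} (hB : B.PosSemidef) (hAB : A ^ 2 = B) :
    A = hB.sqrt := by
  rw [hB.sqrt_eq_cfc]
  exact (CFC.sqrt_unique (by rw [← sq]; exact hAB) hA.nonneg).symm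

end PortSqrt

/-- A positive semidefinite square root of a positive definite matrix has nonzero
(indeed unit) determinant. -/
lemma sqrt_det_isUnit {d : ℕ} {A : Matrix (Fin d) (Fin d) ℝ} (hA : A.PosSemidef)
    (hApd : A.PosDef) : IsUnit hA.sqrt.det := by
  have h : hA.sqrt.det * hA.sqrt.det = A.det := by
    rw [← Matrix.det_mul, hA.sqrt_mul_self]
  have hpos : (0:ℝ) < hA.sqrt.det * hA.sqrt.det := h ▸ hApd.det_pos
  exact isUnit_iff_ne_zero.2 (mul_self_pos.mp hpos)

/-- Trace identity for the derivative of the covariance Fréchet function in terms of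
the solutions Yᵢ of the Sylvester equations
Yᵢ (Sᵢ^{1/2} S Sᵢ^{1/2})^{1/2} + (Sᵢ^{1/2} S Sᵢ^{1/2})^{1/2} Yᵢ = Sᵢ^{1/2} S̃ Sᵢ^{1/2}. -/
theorem trace_identity_sylvester_solutions
    {d n : ℕ}
    (w : Fin n → ℝ) (hw : ∀ i, 0 ≤ w i) (hw1 : ∑ i, w i = 1)
    (S : Matrix (Fin d) (Fin d) ℝ) (hS : S.PosDef)
    (Si : Fin n → Matrix (Fin d) (Fin d) ℝ) (hSi : ∀ i, (Si i).PosDef)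
    (St : Matrix (Fin d) (Fin d) ℝ) (hSt : St.IsSymm)
    (hG : ∀ i, ((hSi i).posSemidef.sqrt * S * (hSi i).posSemidef.sqrt).PosSemidef)
    (hG' : ∀ i, (hS.posSemidef.sqrt * Si i * hS.posSemidef.sqrt).PosSemidef)
    (Y : Fin n → Matrix (Fin d) (Fin d) ℝ)
    (hY : ∀ i, Y i * (hG i).sqrt + (hG i).sqrt * Y i =
        (hSi i).posSemidef.sqrt * St * (hSi i).posSemidef.sqrt) :
    (St - (2:ℝ) • ∑ i, w i • Y i).trace =
      ((1 - ∑ i, w i • ((hS.posSemidef.sqrt)⁻¹ * (hG' i).sqrt * (hS.posSemidef.sqrt)⁻¹)) * St).trace := by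
  set R := hS.posSemidef.sqrt with hRdef
  have hRR : R * R = S := hS.posSemidef.sqrt_mul_self
  have hRdet : IsUnit R.det := sqrt_det_isUnit hS.posSemidef hS
  -- key: 2 * trace (Y i) = trace ((R⁻¹ * (hG' i).sqrt * R⁻¹) * St)
  have key : ∀ i, ((R⁻¹ * (hG' i).sqrt * R⁻¹) * St).trace = 2 * (Y i).trace := by
    intro i
    set Ri := (hSi i).posSemidef.sqrt with hRidef
    have hRiRi : Ri * Ri = Si i := (hSi i).posSemidef.sqrt_mul_self
    set G := (hG i).sqrt with hGdef
    have hGG : G * G = Ri * S * Ri := (hG i).sqrt_mul_self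
    have hRidet : IsUnit Ri.det := sqrt_det_isUnit (hSi i).posSemidef (hSi i)
    have hGdet : IsUnit G.det := by
      have h1 : G.det * G.det = Ri.det * S.det * Ri.det := by
        rw [← Matrix.det_mul, hGG, Matrix.det_mul, Matrix.det_mul]
      have h2 : Ri.det * Ri.det = (Si i).det := by rw [← Matrix.det_mul, hRiRi]
      have hpos : (0:ℝ) < G.det * G.det := by nlinarith [hS.det_pos, (hSi i).det_pos]
      exact isUnit_iff_ne_zero.2 (mul_self_pos.mp hpos)
    have hGinv : G⁻¹ * G = 1 := Matrix.nonsing_inv_mul _ hGdet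
    have hGinv' : G * G⁻¹ = 1 := Matrix.mul_nonsing_inv _ hGdet
    -- B = R Ri G⁻¹ Ri R is the psd square root of R (Si i) R
    set B := R * Ri * G⁻¹ * Ri * R with hBdef
    have hRH : Rᴴ = R := hS.posSemidef.posSemidef_sqrt.isHermitian
    have hRiH : Riᴴ = Ri := (hSi i).posSemidef.posSemidef_sqrt.isHermitian
    have hBpsd : B.PosSemidef := by
      have h := ((hG i).posSemidef_sqrt.inv).conjTranspose_mul_mul_same (B := Ri * R)
      have he : (Ri * R)ᴴ * G⁻¹ * (Ri * R) = B := by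
        rw [Matrix.conjTranspose_mul, hRH, hRiH, hBdef]
        simp only [Matrix.mul_assoc]
      rwa [he] at h
    have hBsq : B ^ 2 = R * Si i * R := by
      have e1 : B * B = R * Ri * (G⁻¹ * (Ri * (R * R) * Ri) * G⁻¹) * (Ri * R) := by
        simp only [hBdef, Matrix.mul_assoc]
      rw [pow_two, e1, hRR, ← hGG]
      calc R * Ri * (G⁻¹ * (G * G) * G⁻¹) * (Ri * R)
          = R * Ri * ((G⁻¹ * G) * (G * G⁻¹)) * (Ri * R) := by
            simp only [Matrix.mul_assoc]
        _ = R * Ri * (Ri * R) := by rw [hGinv, hGinv', Matrix.one_mul, Matrix.mul_one]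
        _ = R * Si i * R := by
            rw [Matrix.mul_assoc R Ri (Ri * R), ← Matrix.mul_assoc Ri Ri R, hRiRi,
              Matrix.mul_assoc]
    have hBeq : B = (hG' i).sqrt := hBpsd.eq_sqrt_of_sq_eq (hG' i) hBsq
    have hM : R⁻¹ * (hG' i).sqrt * R⁻¹ = Ri * G⁻¹ * Ri := by
      rw [← hBeq, hBdef]
      calc R⁻¹ * (R * Ri * G⁻¹ * Ri * R) * R⁻¹
          = (R⁻¹ * R) * (Ri * G⁻¹ * Ri) * (R * R⁻¹) := by simp only [Matrix.mul_assoc]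
        _ = Ri * G⁻¹ * Ri := by
            rw [Matrix.nonsing_inv_mul _ hRdet, Matrix.mul_nonsing_inv _ hRdet,
              Matrix.one_mul, Matrix.mul_one]
    -- trace computation from the Sylvester equation
    have htr : ((Y i * G + G * Y i) * G⁻¹).trace = 2 * (Y i).trace := by
      rw [Matrix.add_mul]
      rw [Matrix.trace_add]
      have t1 : (Y i * G * G⁻¹).trace = (Y i).trace := by
        rw [Matrix.mul_assoc, hGinv', Matrix.mul_one]
      have t2 : (G * Y i * G⁻¹).trace = (Y i).trace := by
        rw [Matrix.trace_mul_comm, ← Matrix.mul_assoc, hGinv, Matrix.one_mul]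
      rw [t1, t2]; ring
    rw [hY i] at htr
    rw [hM, ← htr, Matrix.trace_mul_comm]
    conv_rhs => rw [show Ri * St * Ri * G⁻¹ = Ri * (St * (Ri * G⁻¹)) from by
      simp only [Matrix.mul_assoc], Matrix.trace_mul_comm]
    congr 1
    simp only [Matrix.mul_assoc]
  -- assemble
  have lhs : (St - (2:ℝ) • ∑ i, w i • Y i).trace
      = St.trace - 2 * ∑ i, w i * (Y i).trace := by
    rw [Matrix.trace_sub, Matrix.trace_smul, Matrix.trace_sum]
    simp [Matrix.trace_smul, smul_eq_mul]
  have rhs : ((1 - ∑ i, w i • ((R)⁻¹ * (hG' i).sqrt * (R)⁻¹)) * St).trace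
      = St.trace - ∑ i, w i * (((R)⁻¹ * (hG' i).sqrt * (R)⁻¹) * St).trace := by
    rw [Matrix.sub_mul, Matrix.one_mul, Matrix.trace_sub, Finset.sum_mul]
    congr 1
    rw [Matrix.trace_sum]
    refine Finset.sum_congr rfl fun i _ => ?_
    rw [Matrix.smul_mul, Matrix.trace_smul, smul_eq_mul]
  rw [lhs, rhs]
  rw [Finset.mul_sum]
  congr 1
  refine Finset.sum_congr rfl fun i _ => ?_
  rw [key i]; ring
end
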